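/- Let R be a commutative local ring with s ∈ R. A matrix A ∈ M₂(R;s) is strongly J-clean if and only if A ∈ J(M₂(R;s)), or I₂ - A ∈ J(M₂(R;s)), or the s-characteristic polynomial t² - tr(A)·t + det_s(A) has a root in J(R) and a root in 1 + J(R). -/

import Mathlib

/-- The formal matrix ring `M₂(R;s)`: 2×2 matrices over `R` recorded by their four
entries, with the twisted multiplication
`[[a,b],[c,d]]·[[a',b'],[c',d']] = [[aa'+s²bc', ab'+bd'],[ca'+dc', s²cb'+dd']]`. -/
@[ext]
structure FM (R : Type*) (s : R) : Type _ where
  a : R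
  b : R
  c : R
  d : R

namespace FM

variable {R : Type*} [Ring R] {s : R}

instance : Zero (FM R s) := ⟨⟨0, 0, 0, 0⟩⟩
instance : One (FM R s) := ⟨⟨1, 0, 0, 1⟩⟩
instance : Add (FM R s) := ⟨fun x y => ⟨x.a + y.a, x.b + y.b, x.c + y.c, x.d + y.d⟩⟩
instance : Neg (FM R s) := ⟨fun x => ⟨-x.a, -x.b, -x.c, -x.d⟩⟩
instance : Mul (FM R s) :=
  ⟨fun x y => ⟨x.a * y.a + s * s * (x.b * y.c), x.a * y.b + x.b * y.d,
    x.c * y.a + x.d * y.c, s * s * (x.c * y.b) + x.d * y.d⟩⟩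

@[simp] lemma zero_a : (0 : FM R s).a = 0 := rfl
@[simp] lemma zero_b : (0 : FM R s).b = 0 := rfl
@[simp] lemma zero_c : (0 : FM R s).c = 0 := rfl
@[simp] lemma zero_d : (0 : FM R s).d = 0 := rfl
@[simp] lemma one_a : (1 : FM R s).a = 1 := rfl
@[simp] lemma one_b : (1 : FM R s).b = 0 := rfl
@[simp] lemma one_c : (1 : FM R s).c = 0 := rfl
@[simp] lemma one_d : (1 : FM R s).d = 1 := rfl
@[simp] lemma add_a (x y : FM R s) : (x + y).a = x.a + y.a := rfl
@[simp] lemma add_b (x y : FM R s) : (x + y).b = x.b + y.b := rfl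
@[simp] lemma add_c (x y : FM R s) : (x + y).c = x.c + y.c := rfl
@[simp] lemma add_d (x y : FM R s) : (x + y).d = x.d + y.d := rfl
@[simp] lemma neg_a (x : FM R s) : (-x).a = -x.a := rfl
@[simp] lemma neg_b (x : FM R s) : (-x).b = -x.b := rfl
@[simp] lemma neg_c (x : FM R s) : (-x).c = -x.c := rfl
@[simp] lemma neg_d (x : FM R s) : (-x).d = -x.d := rfl
@[simp] lemma mul_a (x y : FM R s) : (x * y).a = x.a * y.a + s * s * (x.b * y.c) := rfl
@[simp] lemma mul_b (x y : FM R s) : (x * y).b = x.a * y.b + x.b * y.d := rfl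
@[simp] lemma mul_c (x y : FM R s) : (x * y).c = x.c * y.a + x.d * y.c := rfl
@[simp] lemma mul_d (x y : FM R s) : (x * y).d = s * s * (x.c * y.b) + x.d * y.d := rfl

instance : AddCommGroup (FM R s) where
  add_assoc x y z := by ext <;> simp [add_assoc]
  zero_add x := by ext <;> simp
  add_zero x := by ext <;> simp
  add_comm x y := by ext <;> simp [add_comm]
  neg_add_cancel x := by ext <;> simp
  nsmul := nsmulRec
  zsmul := zsmulRec

/-- When `s` is central in `R`, `M₂(R;s)` is a ring. -/
instance [hs : Fact (∀ x : R, s * x = x * s)] : Ring (FM R s) where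
  __ := (inferInstance : AddCommGroup (FM R s))
  mul := (· * ·)
  one := 1
  mul_assoc x y z := by
    have hc : ∀ u v : R, u * (s * v) = s * (u * v) := fun u v => by
      rw [← mul_assoc, ← hs.out u, mul_assoc]
    ext <;> simp only [mul_a, mul_b, mul_c, mul_d, mul_add, add_mul, mul_assoc, hc] <;> abel
  one_mul x := by ext <;> simp
  mul_one x := by ext <;> simp
  left_distrib x y z := by ext <;> simp [mul_add, add_mul] <;> abel
  right_distrib x y z := by ext <;> simp [mul_add, add_mul] <;> abel
  zero_mul x := by ext <;> simp
  mul_zero x := by ext <;> simp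

/-- In a commutative ring every element is central. -/
instance (priority := 100) {R : Type*} [CommRing R] (s : R) : Fact (∀ x : R, s * x = x * s) :=
  ⟨fun x => mul_comm s x⟩

end FM

/-- An element is strongly J-clean if it is the sum of an idempotent and an element of
the Jacobson radical which commute. -/
def IsStronglyJClean {A : Type*} [Ring A] (x : A) : Prop :=
  ∃ e : A, IsIdempotentElem e ∧ x * e = e * x ∧ x - e ∈ (⊥ : Ideal A).jacobson

/-- An element is strongly clean if it is the sum of an idempotent and a unit
which commute. -/
def IsStronglyClean {A : Type*} [Ring A] (x : A) : Prop :=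
  ∃ e : A, IsIdempotentElem e ∧ x * e = e * x ∧ IsUnit (x - e)

/-- An element is strongly nil clean if it is the sum of an idempotent and a nilpotent
which commute. -/
def IsStronglyNilClean {A : Type*} [Ring A] (x : A) : Prop :=
  ∃ e : A, IsIdempotentElem e ∧ x * e = e * x ∧ IsNilpotent (x - e)


/-- The `s`-determinant of a formal matrix. -/
def FM.dets {R : Type*} [CommRing R] {s : R} (A : FM R s) : R :=
  A.a * A.d - s * s * (A.b * A.c)

/-!
Over a local ring, `det_s` of an idempotent `E ≠ 0, 1` is an idempotent of `R` other than `1`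
(otherwise `E` is a unit), so `det_s E = det_s (1 - E) = 0`; for such `E` a direct computation
gives `E X E = tr (E X) E`. Hence if `A` commutes with `E` then `A = x (1 - E) + y E` for scalars
`x, y`, which are roots of the `s`-characteristic polynomial, and `A - E ∈ J` forces
`x, y - 1 ∈ J(R)` because a nonzero idempotent never lies in a Jacobson radical.
Conversely, roots `x ∈ J(R)` and `y ∈ 1 + J(R)` differ by a unit, so they are the two roots
(`tr A = x + y`, `det_s A = x y`), `(A - x)(A - y) = 0`, and `E = (y - x)⁻¹ (A - x)` is an
idempotent commuting with `A` with `A - E = x (1 - E) + (y - 1) E ∈ J`.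
-/

lemma IsIdempotentElem.eq_zero_of_mem_jacobson {M : Type*} [Ring M] {e : M}
    (he : IsIdempotentElem e) (h : e ∈ (⊥ : Ideal M).jacobson) : e = 0 := by
  obtain ⟨z, hz⟩ := Ideal.mem_jacobson_iff.1 h (-1)
  rw [Ideal.mem_bot, sub_eq_zero] at hz
  calc e = (z * -1 * e + z) * e := by rw [hz, one_mul]
    _ = 0 := by rw [add_mul, mul_assoc, he.eq]; noncomm_ring

lemma Ideal.mem_jacobson_bot_of_forall_isUnit {M : Type*} [Ring M] {x : M}
    (h : ∀ y, IsUnit (y * x + 1)) : x ∈ (⊥ : Ideal M).jacobson := by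
  refine Ideal.mem_jacobson_iff.2 fun y => ⟨↑(h y).unit⁻¹, ?_⟩
  rw [Ideal.mem_bot, mul_assoc, ← mul_add_one, IsUnit.val_inv_mul, sub_self]

lemma IsLocalRing.eq_zero_or_eq_one_of_isIdempotentElem {R : Type*} [CommRing R] [IsLocalRing R]
    {e : R} (he : IsIdempotentElem e) : e = 0 ∨ e = 1 := by
  rcases IsLocalRing.isUnit_or_isUnit_one_sub_self e with h | h
  · exact .inr ((IsIdempotentElem.iff_eq_one_of_isUnit h).1 he)
  · exact .inl (sub_eq_self.1 ((IsIdempotentElem.iff_eq_one_of_isUnit h).1 he.one_sub))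

lemma eq_add_and_eq_mul_of_isUnit_sub {R : Type*} [CommRing R] {τ δ x y : R}
    (hx : x ^ 2 - τ * x + δ = 0) (hy : y ^ 2 - τ * y + δ = 0) (hxy : IsUnit (y - x)) :
    τ = x + y ∧ δ = x * y := by
  have hτ : τ = x + y := hxy.mul_left_cancel (by linear_combination hx - hy)
  exact ⟨hτ, by linear_combination hx + x * hτ⟩

section Algebra

variable {R M : Type*} [CommRing R] [Ring M] [Algebra R M]

lemma mem_jacobson_of_smul_mem_jacobson [IsLocalRing R] {e : M} (he : IsIdempotentElem e)
    (he0 : e ≠ 0) {r : R} (h : r • e ∈ (⊥ : Ideal M).jacobson) :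
    r ∈ (⊥ : Ideal R).jacobson := by
  rw [IsLocalRing.jacobson_eq_maximalIdeal ⊥ bot_ne_top, IsLocalRing.mem_maximalIdeal,
    mem_nonunits_iff]
  rintro ⟨u, rfl⟩
  refine he0 (he.eq_zero_of_mem_jacobson ?_)
  rw [← one_smul R e, ← u.inv_mul, mul_smul, Algebra.smul_def]
  exact Ideal.mul_mem_left _ _ h

lemma exists_isIdempotentElem_of_sub_mul_sub_eq_zero {a : M} {x y : R}
    (h : (a - algebraMap R M x) * (a - algebraMap R M y) = 0) (hxy : IsUnit (y - x)) :
    ∃ e : M, IsIdempotentElem e ∧ Commute a e ∧ a = x • (1 - e) + y • e := by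
  obtain ⟨u, hu⟩ := hxy.exists_left_inv
  set p := a - algebraMap R M x
  have hpp : p * p = (y - x) • p := by
    have hq : a - algebraMap R M y = p - algebraMap R M (y - x) := by
      simp only [p, map_sub]; abel
    rwa [hq, mul_sub, sub_eq_zero, ← Algebra.commutes, ← Algebra.smul_def] at h
  have hup : (y - x) • u • p = p := by rw [smul_smul, mul_comm, hu, one_smul]
  refine ⟨u • p, ?_, ?_, ?_⟩
  · rw [IsIdempotentElem, smul_mul_smul_comm, hpp, smul_smul, mul_assoc, hu, mul_one]
  · exact ((Commute.refl a).sub_right (Algebra.commute_algebraMap_right x a)).smul_right u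
  · calc a = x • 1 + p := by simp only [p, Algebra.algebraMap_eq_smul_one]; abel
      _ = x • 1 + (y - x) • u • p := by rw [hup]
      _ = x • (1 - u • p) + y • u • p := by module

end Algebra

namespace FM

variable {R : Type*} [CommRing R] {s : R}

@[simp] lemma sub_a (x y : FM R s) : (x - y).a = x.a - y.a := by simp [sub_eq_add_neg]
@[simp] lemma sub_b (x y : FM R s) : (x - y).b = x.b - y.b := by simp [sub_eq_add_neg]
@[simp] lemma sub_c (x y : FM R s) : (x - y).c = x.c - y.c := by simp [sub_eq_add_neg]
@[simp] lemma sub_d (x y : FM R s) : (x - y).d = x.d - y.d := by simp [sub_eq_add_neg]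

instance : Algebra R (FM R s) where
  smul r x := ⟨r * x.a, r * x.b, r * x.c, r * x.d⟩
  algebraMap :=
    { toFun := fun r => ⟨r, 0, 0, r⟩
      map_one' := rfl
      map_mul' := fun r r' => by ext <;> simp
      map_zero' := rfl
      map_add' := fun r r' => by ext <;> simp }
  commutes' r x := by ext <;> simp [mul_comm]
  smul_def' r x := by ext <;> change r * _ = _ <;> simp

@[simp] lemma smul_a (r : R) (x : FM R s) : (r • x).a = r * x.a := rfl
@[simp] lemma smul_b (r : R) (x : FM R s) : (r • x).b = r * x.b := rfl
@[simp] lemma smul_c (r : R) (x : FM R s) : (r • x).c = r * x.c := rfl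
@[simp] lemma smul_d (r : R) (x : FM R s) : (r • x).d = r * x.d := rfl
@[simp] lemma algebraMap_a (r : R) : (algebraMap R (FM R s) r).a = r := rfl
@[simp] lemma algebraMap_b (r : R) : (algebraMap R (FM R s) r).b = 0 := rfl
@[simp] lemma algebraMap_c (r : R) : (algebraMap R (FM R s) r).c = 0 := rfl
@[simp] lemma algebraMap_d (r : R) : (algebraMap R (FM R s) r).d = r := rfl

def tr (x : FM R s) : R := x.a + x.d

lemma dets_mul (x y : FM R s) : (x * y).dets = x.dets * y.dets := by
  simp only [dets, mul_a, mul_b, mul_c, mul_d]; ring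

lemma dets_smul (r : R) (x : FM R s) : (r • x).dets = r ^ 2 * x.dets := by
  simp only [dets, smul_a, smul_b, smul_c, smul_d]; ring

lemma dets_sub_algebraMap (x : FM R s) (t : R) :
    (x - algebraMap R (FM R s) t).dets = t ^ 2 - x.tr * t + x.dets := by
  simp only [dets, tr, sub_a, sub_b, sub_c, sub_d, algebraMap_a, algebraMap_b, algebraMap_c,
    algebraMap_d]; ring

lemma dets_one_add_smul (r : R) (x : FM R s) :
    (1 + r • x).dets = 1 + r * (x.tr + r * x.dets) := by
  simp only [dets, tr, add_a, add_b, add_c, add_d, smul_a, smul_b, smul_c, smul_d, one_a, one_b,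
    one_c, one_d]; ring

lemma isUnit_of_isUnit_dets {x : FM R s} (h : IsUnit x.dets) : IsUnit x := by
  obtain ⟨u, hu⟩ := h.exists_right_inv
  simp only [dets] at hu
  refine ⟨⟨x, u • ⟨x.d, -x.b, -x.c, x.a⟩, ?_, ?_⟩, rfl⟩ <;> ext <;> simp <;>
    first | linear_combination hu | ring

lemma mul_mul_eq_tr_smul_of_dets_eq_zero {e : FM R s} (he : e.dets = 0) (x : FM R s) :
    e * x * e = (e * x).tr • e := by
  simp only [dets] at he
  ext <;> simp only [tr, mul_a, mul_b, mul_c, mul_d, smul_a, smul_b, smul_c, smul_d]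
  · linear_combination -x.d * he
  · linear_combination x.b * he
  · linear_combination x.c * he
  · linear_combination -x.a * he

lemma algebraMap_mem_jacobson {r : R} (hr : r ∈ (⊥ : Ideal R).jacobson) :
    algebraMap R (FM R s) r ∈ (⊥ : Ideal (FM R s)).jacobson := by
  refine Ideal.mem_jacobson_bot_of_forall_isUnit fun y => isUnit_of_isUnit_dets ?_
  rw [← Algebra.commutes, ← Algebra.smul_def, add_comm, dets_one_add_smul, add_comm]
  exact Ideal.mem_jacobson_bot.1 hr _

lemma smul_mem_jacobson {r : R} (hr : r ∈ (⊥ : Ideal R).jacobson) (x : FM R s) :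
    r • x ∈ (⊥ : Ideal (FM R s)).jacobson := by
  rw [Algebra.smul_def, Algebra.commutes]
  exact Ideal.mul_mem_left _ x (algebraMap_mem_jacobson hr)

lemma sub_algebraMap_mul_sub_algebraMap {x y : R} {a : FM R s} (htr : a.tr = x + y)
    (hdets : a.dets = x * y) :
    (a - algebraMap R (FM R s) x) * (a - algebraMap R (FM R s) y) = 0 := by
  simp only [tr, dets] at htr hdets
  ext <;> simp
  · linear_combination a.a * htr - hdets
  · linear_combination a.b * htr
  · linear_combination a.c * htr
  · linear_combination a.d * htr - hdets

lemma isStronglyJClean_of_roots {a : FM R s} {x y : R} (hx : x ∈ (⊥ : Ideal R).jacobson)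
    (hy : y - 1 ∈ (⊥ : Ideal R).jacobson) (hax : x ^ 2 - a.tr * x + a.dets = 0)
    (hay : y ^ 2 - a.tr * y + a.dets = 0) : IsStronglyJClean a := by
  have hxy : IsUnit (y - x) := Ideal.isUnit_of_sub_one_mem_jacobson_bot _ <| by
    rw [sub_right_comm]; exact sub_mem hy hx
  obtain ⟨htr, hdets⟩ := eq_add_and_eq_mul_of_isUnit_sub hax hay hxy
  obtain ⟨e, he, hae, ha⟩ := exists_isIdempotentElem_of_sub_mul_sub_eq_zero
    (sub_algebraMap_mul_sub_algebraMap htr hdets) hxy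
  have hae' : a - e = x • (1 - e) + (y - 1) • e := by rw [ha]; module
  exact ⟨e, he, hae, hae' ▸ add_mem (smul_mem_jacobson hx _) (smul_mem_jacobson hy _)⟩

lemma mul_eq_tr_smul_of_dets_eq_zero {e a : FM R s} (he : IsIdempotentElem e) (hd : e.dets = 0)
    (hae : Commute a e) : a * e = (e * a).tr • e := by
  rw [← mul_mul_eq_tr_smul_of_dets_eq_zero hd, ← hae.eq, mul_assoc, he.eq]

variable [IsLocalRing R]

lemma dets_eq_zero_of_isIdempotentElem {e : FM R s} (he : IsIdempotentElem e) (he1 : e ≠ 1) :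
    e.dets = 0 := by
  have hd : IsIdempotentElem e.dets := by rw [IsIdempotentElem, ← dets_mul, he.eq]
  refine (IsLocalRing.eq_zero_or_eq_one_of_isIdempotentElem hd).resolve_right fun h => he1 ?_
  exact (IsIdempotentElem.iff_eq_one_of_isUnit (isUnit_of_isUnit_dets (h ▸ isUnit_one))).1 he

lemma exists_roots_of_isIdempotentElem {a e : FM R s} (he : IsIdempotentElem e) (he0 : e ≠ 0)
    (he1 : e ≠ 1) (hae : Commute a e) (hmem : a - e ∈ (⊥ : Ideal (FM R s)).jacobson) :
    ∃ x y : R, x ∈ (⊥ : Ideal R).jacobson ∧ y - 1 ∈ (⊥ : Ideal R).jacobson ∧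
      x ^ 2 - a.tr * x + a.dets = 0 ∧ y ^ 2 - a.tr * y + a.dets = 0 := by
  obtain ⟨f, hf_def⟩ : ∃ f : FM R s, f = 1 - e := ⟨_, rfl⟩
  have hf : IsIdempotentElem f := hf_def ▸ he.one_sub
  have haf : Commute a f := hf_def ▸ (Commute.one_right a).sub_right hae
  have hf0 : f ≠ 0 := hf_def ▸ sub_ne_zero.2 (Ne.symm he1)
  have hf1 : f ≠ 1 := by rwa [hf_def, Ne, sub_eq_self]
  obtain ⟨y, hy⟩ : ∃ y : R, a * e = y • e :=
    ⟨_, mul_eq_tr_smul_of_dets_eq_zero he (dets_eq_zero_of_isIdempotentElem he he1) hae⟩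
  obtain ⟨x, hx⟩ : ∃ x : R, a * f = x • f :=
    ⟨_, mul_eq_tr_smul_of_dets_eq_zero hf (dets_eq_zero_of_isIdempotentElem hf hf1) haf⟩
  have ha : a = x • f + y • e := by rw [← hx, ← hy, ← mul_add, hf_def, sub_add_cancel, mul_one]
  have hfe : f * e = 0 := by rw [hf_def, sub_mul, one_mul, he.eq, sub_self]
  refine ⟨x, y, ?_, ?_, ?_, ?_⟩
  · refine mem_jacobson_of_smul_mem_jacobson hf hf0 ?_
    rw [← hx, show a * f = f * (a - e) by rw [mul_sub, ← haf.eq, hfe, sub_zero]]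
    exact Ideal.mul_mem_left _ f hmem
  · refine mem_jacobson_of_smul_mem_jacobson he he0 ?_
    rw [show (y - 1) • e = e * (a - e) by rw [mul_sub, ← hae.eq, hy, he.eq, sub_smul, one_smul]]
    exact Ideal.mul_mem_left _ e hmem
  · have hax : a - algebraMap R (FM R s) x = (y - x) • e := by
      rw [Algebra.algebraMap_eq_smul_one, ha, hf_def]; module
    rw [← dets_sub_algebraMap, hax, dets_smul, dets_eq_zero_of_isIdempotentElem he he1, mul_zero]
  · have hay : a - algebraMap R (FM R s) y = (x - y) • f := by
      rw [Algebra.algebraMap_eq_smul_one, ha, hf_def]; module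
    rw [← dets_sub_algebraMap, hay, dets_smul, dets_eq_zero_of_isIdempotentElem hf hf1, mul_zero]

end FM

theorem stmt19 {R : Type*} [CommRing R] [IsLocalRing R] (s : R) (A : FM R s) :
    IsStronglyJClean A ↔
      A ∈ (⊥ : Ideal (FM R s)).jacobson ∨ 1 - A ∈ (⊥ : Ideal (FM R s)).jacobson ∨
        ∃ x y : R, x ∈ (⊥ : Ideal R).jacobson ∧ y - 1 ∈ (⊥ : Ideal R).jacobson ∧
          x ^ 2 - (A.a + A.d) * x + A.dets = 0 ∧ y ^ 2 - (A.a + A.d) * y + A.dets = 0 := by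
  constructor
  · rintro ⟨E, hE, hAE, hW⟩
    by_cases h0 : E = 0
    · exact .inl (by simpa [h0] using hW)
    by_cases h1 : E = 1
    · exact .inr (.inl (by simpa [h1] using neg_mem hW))
    exact .inr (.inr (FM.exists_roots_of_isIdempotentElem hE h0 h1 hAE hW))
  · rintro (hA | hA | ⟨x, y, hx, hy, hAx, hAy⟩)
    · exact ⟨0, .zero, (Commute.zero_right A).eq, by simpa using hA⟩
    · exact ⟨1, .one, (Commute.one_right A).eq, by simpa using neg_mem hA⟩
    · exact FM.isStronglyJClean_of_roots hx hy hAx hAy
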